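/- arXiv:2411.16385 — 5 statements merged into one kernel-verified Lean document; each statement's English description precedes it below -/
import Mathlib

section
/- Let p(z) = z^n + a_{n-1}z^{n-1} + … + a_1 z + a_0 be a monic polynomial over ℂ of degree n ≥ 3. Then every complex root λ of p satisfies |λ| ≤ Γ(p); equivalently, μ(p) ≤ Γ(p). -/
/-!
If `r = |λ| > Γ(p)`, then `r > 3τ`, and `|a_{n-k}| ≤ w_k τ^k` with weights `w_3 = 2.15`,
`w_4 = 2`, `w_k = 1` makes the tail `∑_{k ≥ 3} |a_{n-k}| r^{n-k}` at most
`τ² r^{n-2} ∑_k w_k 3^{2-k} ≤ τ² r^{n-2}`, since `2.15/3 + 2/9 + 1/18 < 1`.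
The root equation then gives `r² ≤ |a_{n-1}| r + |a_{n-2}| + τ²`, which the second entry
of `Γ(p)` rules out.
-/

open Finset

/-- The `k`-th term in the definition of `τ`: for `k = 3` it is `(|a (n-3)|/2.15)^(1/3)`,
for `k = 4` it is `(|a (n-4)|/2)^(1/4)`, and for `k ≥ 5` it is `|a (n-k)|^(1/k)`. -/
noncomputable def tauTerm (n k : ℕ) (a : ℕ → ℂ) : ℝ :=
  if k = 3 then (‖a (n - 3)‖ / 2.15) ^ ((1 : ℝ) / 3)
  else if k = 4 then (‖a (n - 4)‖ / 2) ^ ((1 : ℝ) / 4)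
  else (‖a (n - k)‖) ^ ((1 : ℝ) / k)

/-- `τ = max{(|a_{n-3}|/2.15)^(1/3), (|a_{n-4}|/2)^(1/4), |a_{n-5}|^(1/5), …, |a_0|^(1/n)}`. -/
noncomputable def tau (n : ℕ) (a : ℕ → ℂ) (hn : 3 ≤ n) : ℝ :=
  (Finset.Icc 3 n).sup' (Finset.nonempty_Icc.mpr hn) (fun k => tauTerm n k a)

/-- The root bound `Γ(p)`. -/
noncomputable def Gamma (n : ℕ) (a : ℕ → ℂ) (hn : 3 ≤ n) : ℝ :=
  max (Real.sqrt 3.15 *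
        Real.sqrt ((tau n a hn) ^ 2 + max (‖a (n - 2)‖) (2 * (tau n a hn) ^ 2)))
      ((‖a (n - 1)‖ +
        Real.sqrt ((‖a (n - 1)‖) ^ 2 +
          4 * ((tau n a hn) ^ 2 + max (‖a (n - 2)‖) (2.15 * (tau n a hn) ^ 2)))) / 2)

noncomputable def tauWeight (k : ℕ) : ℝ := if k = 3 then 2.15 else if k = 4 then 2 else 1

lemma tauWeight_pos (k : ℕ) : 0 < tauWeight k := by
  unfold tauWeight; split_ifs <;> norm_num

lemma tauTerm_eq (n k : ℕ) (a : ℕ → ℂ) :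
    tauTerm n k a = (‖a (n - k)‖ / tauWeight k) ^ ((1 : ℝ) / k) := by
  unfold tauTerm tauWeight
  split_ifs with h3 h4 <;> simp [*]

lemma tauTerm_le_tau (n k : ℕ) (a : ℕ → ℂ) (hn : 3 ≤ n) (hk3 : 3 ≤ k) (hkn : k ≤ n) :
    tauTerm n k a ≤ tau n a hn :=
  le_sup' (fun k => tauTerm n k a) (mem_Icc.mpr ⟨hk3, hkn⟩)

lemma tau_nonneg (n : ℕ) (a : ℕ → ℂ) (hn : 3 ≤ n) : 0 ≤ tau n a hn := by
  refine le_trans ?_ (tauTerm_le_tau n 3 a hn le_rfl hn)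
  rw [tauTerm_eq]
  exact Real.rpow_nonneg (div_nonneg (norm_nonneg _) (tauWeight_pos 3).le) _

lemma le_mul_pow_of_rpow_one_div_le {x c t : ℝ} {k : ℕ} (hx : 0 ≤ x) (hc : 0 < c) (hk : k ≠ 0)
    (h : (x / c) ^ ((1 : ℝ) / k) ≤ t) : x ≤ c * t ^ k := by
  have hxc : 0 ≤ x / c := div_nonneg hx hc.le
  have := pow_le_pow_left₀ (Real.rpow_nonneg hxc _) h k
  rwa [one_div, Real.rpow_inv_natCast_pow hxc hk, div_le_iff₀' hc] at this

lemma norm_coeff_le_tauWeight_mul_tau_pow (n k : ℕ) (a : ℕ → ℂ) (hn : 3 ≤ n) (hk3 : 3 ≤ k)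
    (hkn : k ≤ n) : ‖a (n - k)‖ ≤ tauWeight k * tau n a hn ^ k :=
  le_mul_pow_of_rpow_one_div_le (norm_nonneg _) (tauWeight_pos k) (by omega)
    (tauTerm_eq n k a ▸ tauTerm_le_tau n k a hn hk3 hkn)

lemma sum_tauWeight_mul_pow_le_one (m : ℕ) :
    ∑ j ∈ range m, tauWeight (j + 3) * (1 / 3 : ℝ) ^ (j + 1) ≤ 1 := by
  have htail : ∑ j ∈ range m, tauWeight (j + 1 + 1 + 3) * (1 / 3 : ℝ) ^ (j + 1 + 1 + 1)
      = 1 / 27 * ∑ j ∈ range m, (1 / 3 : ℝ) ^ j := by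
    rw [mul_sum]
    refine sum_congr rfl fun j _ => ?_
    rw [tauWeight, if_neg (by omega), if_neg (by omega)]
    ring
  have hgeom := geom_sum_Ico_le_of_lt_one (m := 0) (n := m) (x := (1 / 3 : ℝ)) (by norm_num)
    (by norm_num)
  rw [← range_eq_Ico] at hgeom
  calc ∑ j ∈ range m, tauWeight (j + 3) * (1 / 3 : ℝ) ^ (j + 1)
      ≤ ∑ j ∈ range (m + 2), tauWeight (j + 3) * (1 / 3 : ℝ) ^ (j + 1) :=
        sum_le_sum_of_subset_of_nonneg (range_mono (by omega))
          fun j _ _ => mul_nonneg (tauWeight_pos _).le (by positivity)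
    _ ≤ 1 := by
        rw [sum_range_succ', sum_range_succ', htail]
        norm_num [tauWeight] at hgeom ⊢
        linarith

lemma sum_range_norm_mul_pow_le_tau_sq (m : ℕ) (a : ℕ → ℂ) (hm : 3 ≤ m + 2) {r : ℝ}
    (hr : 3 * tau (m + 2) a hm ≤ r) :
    ∑ i ∈ range m, ‖a i‖ * r ^ i ≤ tau (m + 2) a hm ^ 2 * r ^ m := by
  set t := tau (m + 2) a hm
  have ht : 0 ≤ t := tau_nonneg _ a hm
  have hr0 : 0 ≤ r := by linarith
  have hterm : ∀ j ∈ range m, ‖a (m - 1 - j)‖ * r ^ (m - 1 - j)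
      ≤ tauWeight (j + 3) * (1 / 3 : ℝ) ^ (j + 1) * (t ^ 2 * r ^ m) := by
    intro j hj
    have hjm : j < m := mem_range.mp hj
    have hcoeff := norm_coeff_le_tauWeight_mul_tau_pow (m + 2) (j + 3) a hm (by omega) (by omega)
    rw [show m + 2 - (j + 3) = m - 1 - j by omega] at hcoeff
    have hw := (tauWeight_pos (j + 3)).le
    calc ‖a (m - 1 - j)‖ * r ^ (m - 1 - j)
        ≤ tauWeight (j + 3) * t ^ (j + 3) * r ^ (m - 1 - j) := by gcongr
      _ = tauWeight (j + 3) * t ^ 2 * t ^ (j + 1) * r ^ (m - 1 - j) := by ring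
      _ ≤ tauWeight (j + 3) * t ^ 2 * (r / 3) ^ (j + 1) * r ^ (m - 1 - j) := by
          gcongr
          linarith
      _ = tauWeight (j + 3) * (1 / 3 : ℝ) ^ (j + 1)
            * (t ^ 2 * (r ^ (j + 1) * r ^ (m - 1 - j))) := by ring
      _ = tauWeight (j + 3) * (1 / 3 : ℝ) ^ (j + 1) * (t ^ 2 * r ^ m) := by
          rw [← pow_add, show j + 1 + (m - 1 - j) = m by omega]
  calc ∑ i ∈ range m, ‖a i‖ * r ^ i
      = ∑ j ∈ range m, ‖a (m - 1 - j)‖ * r ^ (m - 1 - j) :=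
        (sum_range_reflect (fun i => ‖a i‖ * r ^ i) m).symm
    _ ≤ ∑ j ∈ range m, tauWeight (j + 3) * (1 / 3 : ℝ) ^ (j + 1) * (t ^ 2 * r ^ m) :=
        sum_le_sum hterm
    _ ≤ t ^ 2 * r ^ m := by
        rw [← sum_mul]
        exact mul_le_of_le_one_left (by positivity) (sum_tauWeight_mul_pow_le_one m)

lemma norm_pow_le_sum_norm_mul_pow {𝕜 : Type*} [NormedDivisionRing 𝕜] {n : ℕ} {a : ℕ → 𝕜}
    {x : 𝕜} (hx : x ^ n + ∑ i ∈ range n, a i * x ^ i = 0) :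
    ‖x‖ ^ n ≤ ∑ i ∈ range n, ‖a i‖ * ‖x‖ ^ i := by
  rw [← norm_pow, eq_neg_of_add_eq_zero_left hx, norm_neg]
  refine (norm_sum_le _ _).trans_eq ?_
  simp only [norm_mul, norm_pow]

lemma mul_add_lt_sq_of_half_add_sqrt_lt {b c r : ℝ} (hc : 0 ≤ c)
    (h : (b + √(b ^ 2 + 4 * c)) / 2 < r) : b * r + c < r ^ 2 := by
  have hs := Real.sq_sqrt (by positivity : 0 ≤ b ^ 2 + 4 * c)
  nlinarith [Real.sqrt_nonneg (b ^ 2 + 4 * c)]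

lemma three_mul_tau_le_Gamma (n : ℕ) (a : ℕ → ℂ) (hn : 3 ≤ n) :
    3 * tau n a hn ≤ Gamma n a hn := by
  set t := tau n a hn
  have ht := tau_nonneg n a hn
  refine le_trans ?_ (le_max_left _ _)
  rw [← Real.sqrt_mul (by norm_num), Real.le_sqrt (by positivity) (by positivity)]
  nlinarith [le_max_right ‖a (n - 2)‖ (2 * t ^ 2)]

/-- Every root of the monic polynomial `z^n + Σ_{i<n} a i z^i` (degree `n ≥ 3`)
has modulus at most `Γ(p)`; equivalently `μ(p) ≤ Γ(p)`. -/
theorem maxRootModulus_le_Gamma (n : ℕ) (hn : 3 ≤ n) (a : ℕ → ℂ) (lam : ℂ)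
    (hroot : lam ^ n + ∑ i ∈ Finset.range n, a i * lam ^ i = 0) :
    ‖lam‖ ≤ Gamma n a hn := by
  by_contra! hlt
  have hpow := norm_pow_le_sum_norm_mul_pow hroot
  obtain ⟨m, rfl⟩ : ∃ m, n = m + 2 := ⟨n - 2, by omega⟩
  set r := ‖lam‖
  set t := tau (m + 2) a hn
  have h3t : 3 * t < r := (three_mul_tau_le_Gamma _ a hn).trans_lt hlt
  have hquad := mul_add_lt_sq_of_half_add_sqrt_lt
    (by positivity : 0 ≤ t ^ 2 + max ‖a (m + 2 - 2)‖ (2.15 * t ^ 2))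
    ((le_max_right _ _).trans_lt hlt)
  simp only [Nat.add_sub_cancel, show m + 2 - 1 = m + 1 by omega] at hquad
  have htail := sum_range_norm_mul_pow_le_tau_sq m a hn h3t.le
  rw [sum_range_succ, sum_range_succ] at hpow
  have hr : 0 < r := by linarith [tau_nonneg _ a hn]
  have hlow : (‖a (m + 1)‖ * r + (t ^ 2 + ‖a m‖)) * r ^ m < r ^ 2 * r ^ m := by
    gcongr
    linarith [le_max_left ‖a m‖ (2.15 * t ^ 2)]
  have : r ^ (m + 2) < r ^ (m + 2) := calc
    r ^ (m + 2) ≤ t ^ 2 * r ^ m + ‖a m‖ * r ^ m + ‖a (m + 1)‖ * r ^ (m + 1) := by linarith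
    _ = (‖a (m + 1)‖ * r + (t ^ 2 + ‖a m‖)) * r ^ m := by ring
    _ < r ^ 2 * r ^ m := hlow
    _ = r ^ (m + 2) := by ring
  exact lt_irrefl _ this
end

section
/- For every natural number n ≥ 11, the inequality 1.4655 · n ≤ 1.05 · (2^{1/n} − 1)^{-1} holds; that is, the worst-case factor 1.4655·n exceeds the lower threshold (2^{1/n} − 1)^{-1} for the overestimation of any absolute root bound by less than 5 percent. -/
/-- For all `n ≥ 11`, `1.4655 · n ≤ 1.05 · (2^(1/n) − 1)⁻¹`. -/
theorem overestimation_within_five_percent (n : ℕ) (hn : 11 ≤ n) :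
    1.4655 * (n : ℝ) ≤ 1.05 * ((2 : ℝ) ^ ((1 : ℝ) / n) - 1)⁻¹ := by
  have hm : (11:ℝ) ≤ n := by exact_mod_cast hn
  have hm0 : (0:ℝ) < n := by linarith
  have hL1 : Real.log 2 < 0.6931471808 := Real.log_two_lt_d9
  have hL0 : (0.6931471803:ℝ) < Real.log 2 := Real.log_two_gt_d9
  set L := Real.log 2 with hLdef
  set x := L / (n:ℝ) with hx
  have hx0 : 0 < x := by
    apply div_pos (by linarith) hm0
  have hx1 : x ≤ 0.064 := by
    rw [hx, div_le_iff₀ hm0]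
    nlinarith
  have hpow : (2:ℝ) ^ ((1:ℝ)/n) = Real.exp x := by
    rw [Real.rpow_def_of_pos (by norm_num), hx, hLdef]
    ring_nf
  have hnx : (n:ℝ) * x = L := by
    rw [hx]; field_simp
  -- exp bound with 4 terms
  have hexp : Real.exp x ≤ 1 + x + x^2/2 + x^3/6 + 5/96 * x^4 := by
    have h := Real.exp_bound' (le_of_lt hx0) (by linarith) (n := 4) (by norm_num)
    simp [Finset.sum_range_succ, Nat.factorial] at h
    nlinarith [h]
  set B : ℝ := x + x^2/2 + x^3/6 + 5/96 * x^4 with hB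
  have hBpos : 0 < B := by positivity
  have hlt : 0 < (2:ℝ) ^ ((1:ℝ)/n) - 1 := by
    rw [hpow]
    nlinarith [Real.add_one_le_exp x]
  have hle : (2:ℝ) ^ ((1:ℝ)/n) - 1 ≤ B := by
    rw [hpow]; rw [hB]; linarith
  have hinv : B⁻¹ ≤ ((2:ℝ) ^ ((1:ℝ)/n) - 1)⁻¹ := by
    exact inv_anti₀ hlt hle
  have key : 1.4655 * (n:ℝ) * B ≤ 1.05 := by
    have hexpand : (n:ℝ) * B = L * (1 + x/2 + x^2/6 + 5/96 * x^3) := by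
      rw [hB]; nlinarith [hnx]
    have h1 : 1.4655 * (L * (1 + x/2 + x^2/6 + 5/96 * x^3))
        ≤ 1.4655 * ((0.6931471808:ℝ) * (1 + 0.064/2 + 0.064^2/6 + 5/96 * 0.064^3)) := by
      gcongr <;> nlinarith
    calc 1.4655 * (n:ℝ) * B = 1.4655 * (L * (1 + x/2 + x^2/6 + 5/96 * x^3)) := by
            rw [mul_assoc, hexpand]
      _ ≤ _ := h1
      _ ≤ 1.05 := by norm_num
  have : 1.4655 * (n:ℝ) ≤ 1.05 * B⁻¹ := by
    rw [show (1.05:ℝ) * B⁻¹ = 1.05 / B from (div_eq_mul_inv _ _).symm, le_div_iff₀ hBpos]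
    linarith [key]
  calc 1.4655 * (n:ℝ) ≤ 1.05 * B⁻¹ := this
    _ ≤ 1.05 * ((2:ℝ) ^ ((1:ℝ)/n) - 1)⁻¹ := by
        nlinarith [hinv]
end

section
/- For every natural number n ≥ 85, the inequality 1.4655 · n ≤ 1.02 · (2^{1/n} − 1)^{-1} holds; that is, the worst-case factor 1.4655·n exceeds the lower threshold (2^{1/n} − 1)^{-1} for the overestimation of any absolute root bound by at most 2 percent. -/
/-- For all `n ≥ 85`, `1.4655 · n ≤ 1.02 · (2^(1/n) − 1)⁻¹`. -/
theorem overestimation_within_two_percent (n : ℕ) (hn : 85 ≤ n) :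
    1.4655 * (n : ℝ) ≤ 1.02 * ((2 : ℝ) ^ ((1 : ℝ) / n) - 1)⁻¹ := by
  have hn' : (85 : ℝ) ≤ (n : ℝ) := by exact_mod_cast hn
  have hnpos : (0 : ℝ) < n := by linarith
  set x : ℝ := Real.log 2 / n with hxdef
  have hL0 : (0 : ℝ) < Real.log 2 := Real.log_pos (by norm_num)
  have hLu : Real.log 2 < 0.6931472 := by
    have := Real.log_two_lt_d9
    linarith
  have hx0 : 0 < x := div_pos hL0 hnpos
  have hxle : x ≤ 0.6931472 / 85 := by
    rw [hxdef, div_le_div_iff₀ hnpos (by norm_num)]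
    nlinarith
  have hx1 : x ≤ 1 := by linarith
  have hrpow : (2 : ℝ) ^ ((1 : ℝ) / n) = Real.exp x := by
    rw [Real.rpow_def_of_pos (by norm_num : (0:ℝ) < 2)]
    congr 1
    rw [hxdef]; ring
  rw [hrpow]
  have hexp : Real.exp x ≤ 1 + x + x ^ 2 / 2 + x ^ 3 * (2 / 9) := by
    have h := Real.exp_bound' hx0.le hx1 (n := 3) (by norm_num)
    simp [Finset.sum_range_succ, Nat.factorial] at h
    nlinarith [h]
  have hden : 0 < Real.exp x - 1 := by
    have := Real.add_one_lt_exp (x := x) (ne_of_gt hx0)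
    linarith
  rw [show (1.02:ℝ) * (Real.exp x - 1)⁻¹ = 1.02 / (Real.exp x - 1) from
    (div_eq_mul_inv _ _).symm, le_div_iff₀ hden]
  have hnx : (n : ℝ) * x = Real.log 2 := by
    rw [hxdef]; field_simp
  have key : (n : ℝ) * (Real.exp x - 1) ≤
      Real.log 2 + Real.log 2 * x / 2 + Real.log 2 * x ^ 2 * (2 / 9) := by
    have h2 : (n : ℝ) * (Real.exp x - 1) ≤ (n:ℝ) * (x + x ^ 2 / 2 + x ^ 3 * (2 / 9)) := by
      apply mul_le_mul_of_nonneg_left _ hnpos.le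
      linarith
    calc (n : ℝ) * (Real.exp x - 1) ≤ (n:ℝ) * (x + x ^ 2 / 2 + x ^ 3 * (2 / 9)) := h2
      _ = (n:ℝ)*x + ((n:ℝ)*x) * x / 2 + ((n:ℝ)*x) * x ^ 2 * (2/9) := by ring
      _ = Real.log 2 + Real.log 2 * x / 2 + Real.log 2 * x ^ 2 * (2 / 9) := by rw [hnx]
  nlinarith [key, hx0, hxle, hLu, hL0, mul_pos hx0 hx0]
end

section
/- Let p(z) = z^n + a_{n-1}z^{n-1} + … + a_1 z + a_0 be a monic polynomial over ℂ of degree n ≥ 3 whose coefficients satisfy the normalization Σ_{i=0}^{n-1} |a_i| = 1 (equivalently, whose Cauchy bound equals 1). Then τ ≤ 1 and Γ(p) ≤ √9.45 ≈ 3.0741. -/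
open Finset

/-!
Under the normalization every coefficient has modulus at most `1`, so every term of `τ` is at
most `1`. Both expressions in `Γ(p)` are monotone in `τ`, `|a_{n-1}|` and `|a_{n-2}|`;
at the value `1` of all three the first one is exactly `√3.15 · √3 = √9.45`, and the second
one is `(1 + √13.6)/2 < 3`.
-/

lemma norm_le_one_of_sum_norm_eq_one {n : ℕ} {a : ℕ → ℂ}
    (hnorm : ∑ i ∈ range n, ‖a i‖ = 1) (i : ℕ) (hi : i < n) : ‖a i‖ ≤ 1 :=
  hnorm ▸ single_le_sum (fun j _ => norm_nonneg (a j)) (mem_range.mpr hi)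

lemma tauTerm_nonneg (n k : ℕ) (a : ℕ → ℂ) : 0 ≤ tauTerm n k a := by
  unfold tauTerm
  split_ifs <;> positivity

lemma tauTerm_le_one {n k : ℕ} {a : ℕ → ℂ} (h : ‖a (n - k)‖ ≤ 1) : tauTerm n k a ≤ 1 := by
  have h0 : 0 ≤ ‖a (n - k)‖ := norm_nonneg _
  unfold tauTerm
  split_ifs with h3 h4
  · subst h3
    exact Real.rpow_le_one (by positivity) ((div_le_one (by norm_num)).mpr (by linarith))
      (by norm_num)
  · subst h4
    exact Real.rpow_le_one (by positivity) ((div_le_one (by norm_num)).mpr (by linarith))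
      (by norm_num)
  · exact Real.rpow_le_one h0 h (by positivity)

lemma tau_le_one {n : ℕ} {a : ℕ → ℂ} (hn : 3 ≤ n) (ha : ∀ i < n, ‖a i‖ ≤ 1) :
    tau n a hn ≤ 1 :=
  sup'_le _ _ fun k hk => tauTerm_le_one (ha _ (by simp only [mem_Icc] at hk; omega))

lemma sqrt_mul_sqrt_le_sqrt_9_45 {t b : ℝ} (ht0 : 0 ≤ t) (ht : t ≤ 1) (hb : b ≤ 1) :
    √3.15 * √(t ^ 2 + max b (2 * t ^ 2)) ≤ √9.45 := by
  rw [← Real.sqrt_mul (by norm_num)]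
  have hmax : max b (2 * t ^ 2) ≤ 2 := max_le (by linarith) (by nlinarith)
  gcongr
  nlinarith

lemma quadratic_root_bound_le_three {c b t : ℝ} (hc0 : 0 ≤ c) (hc : c ≤ 1) (hb : b ≤ 1)
    (ht0 : 0 ≤ t) (ht : t ≤ 1) :
    (c + √(c ^ 2 + 4 * (t ^ 2 + max b (2.15 * t ^ 2)))) / 2 ≤ 3 := by
  have hmax : max b (2.15 * t ^ 2) ≤ 2.15 := max_le (by linarith) (by nlinarith)
  have hsqrt : √(c ^ 2 + 4 * (t ^ 2 + max b (2.15 * t ^ 2))) ≤ 5 :=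
    Real.sqrt_le_iff.mpr ⟨by norm_num, by nlinarith⟩
  linarith

/-- If the coefficients satisfy the normalization `Σ_{i<n} |a i| = 1` (Cauchy bound 1),
then `τ ≤ 1` and `Γ(p) ≤ √9.45`. -/
theorem Gamma_le_of_normalized (n : ℕ) (hn : 3 ≤ n) (a : ℕ → ℂ)
    (hnorm : ∑ i ∈ Finset.range n, ‖a i‖ = 1) :
    tau n a hn ≤ 1 ∧ Gamma n a hn ≤ Real.sqrt 9.45 := by
  have ha := norm_le_one_of_sum_norm_eq_one hnorm
  have htau : tau n a hn ≤ 1 := tau_le_one hn ha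
  have hthree : (3 : ℝ) ≤ √9.45 := Real.le_sqrt_of_sq_le (by norm_num)
  refine ⟨htau, max_le ?_ ?_⟩
  · exact sqrt_mul_sqrt_le_sqrt_9_45 (tau_nonneg n a hn) htau (ha _ (by omega))
  · exact (quadratic_root_bound_le_three (norm_nonneg _) (ha _ (by omega)) (ha _ (by omega))
      (tau_nonneg n a hn) htau).trans hthree
end

section
/- Let p(z) = z^n + a_{n-1}z^{n-1} + … + a_1 z + a_0 be a monic polynomial over ℂ of degree n ≥ 3 with some a_i ≠ 0, and let ρ > 0 be the (unique) positive real number satisfying ρ^n = Σ_{i=0}^{n-1} |a_i| ρ^i (the Cauchy bound of p). Then Γ(p) ≤ √9.45 · ρ; i.e., the relative overestimation of the Cauchy bound by Γ(p) does not exceed √9.45 ≈ 3.0741. -/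
open Finset

/-! Each term `c i ρ^i` of `ρ^n = ∑ c i ρ^i` is at most `ρ^n`, so `c (n-k) ≤ ρ^k`; hence every
quantity entering `Γ` is bounded by the corresponding power of `ρ`, i.e. `τ ≤ ρ`,
`|a_{n-1}| ≤ ρ`, `|a_{n-2}| ≤ ρ²`. Since `Γ` is monotone in these quantities, `Γ(p)` is at most
its value at `τ = ρ`, `|a_{n-1}| = ρ`, `|a_{n-2}| = ρ²`, which is
`max (√9.45, (1 + √13.6)/2) · ρ = √9.45 · ρ`. -/

lemma coeff_le_pow_of_pow_eq_sum {c : ℕ → ℝ} (hc : ∀ i, 0 ≤ c i) {n k : ℕ} {ρ : ℝ}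
    (hρ : 0 < ρ) (hsum : ρ ^ n = ∑ i ∈ range n, c i * ρ ^ i) (hk : 0 < k) (hkn : k ≤ n) :
    c (n - k) ≤ ρ ^ k := by
  have hterm : c (n - k) * ρ ^ (n - k) ≤ ρ ^ k * ρ ^ (n - k) := by
    rw [← pow_add, Nat.add_sub_cancel' hkn, hsum]
    exact single_le_sum (f := fun i => c i * ρ ^ i) (fun i _ => by have := hc i; positivity)
      (mem_range.mpr (by omega))
  exact le_of_mul_le_mul_right hterm (pow_pos hρ _)

lemma rpow_one_div_le_of_le_pow {x ρ : ℝ} {k : ℕ} (hx : 0 ≤ x) (hρ : 0 ≤ ρ) (hk : 0 < k)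
    (h : x ≤ ρ ^ k) : x ^ ((1 : ℝ) / k) ≤ ρ := by
  rwa [one_div, Real.rpow_inv_le_iff_of_pos hx hρ (by positivity), Real.rpow_natCast]

lemma tauTerm_le {n k : ℕ} {a : ℕ → ℂ} {ρ : ℝ} (hρ : 0 ≤ ρ) (hk : 0 < k)
    (h : ‖a (n - k)‖ ≤ ρ ^ k) : tauTerm n k a ≤ ρ := by
  unfold tauTerm
  split_ifs with h3 h4
  · subst h3
    exact rpow_one_div_le_of_le_pow (by positivity) hρ hk
      ((div_le_self (norm_nonneg _) (by norm_num)).trans h)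
  · subst h4
    exact rpow_one_div_le_of_le_pow (by positivity) hρ hk
      ((div_le_self (norm_nonneg _) (by norm_num)).trans h)
  · exact rpow_one_div_le_of_le_pow (norm_nonneg _) hρ hk h

lemma tau_le {n : ℕ} {a : ℕ → ℂ} (hn : 3 ≤ n) {ρ : ℝ} (hρ : 0 ≤ ρ)
    (h : ∀ k ∈ Icc 3 n, ‖a (n - k)‖ ≤ ρ ^ k) : tau n a hn ≤ ρ :=
  sup'_le _ _ fun k hk => tauTerm_le hρ (by grind) (h k hk)

lemma sqrt_mul_sqrt_add_max_le {t b ρ : ℝ} (ht0 : 0 ≤ t) (ht : t ≤ ρ) (hb : b ≤ ρ ^ 2) :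
    √3.15 * √(t ^ 2 + max b (2 * t ^ 2)) ≤ √9.45 * ρ := by
  have hρ : 0 ≤ ρ := ht0.trans ht
  have ht2 : t ^ 2 ≤ ρ ^ 2 := pow_le_pow_left₀ ht0 ht 2
  have hinner : t ^ 2 + max b (2 * t ^ 2) ≤ 3 * ρ ^ 2 := by
    have : max b (2 * t ^ 2) ≤ 2 * ρ ^ 2 := max_le (by linarith [sq_nonneg ρ]) (by linarith)
    linarith
  calc √3.15 * √(t ^ 2 + max b (2 * t ^ 2))
      ≤ √3.15 * √(3 * ρ ^ 2) := by gcongr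
    _ = √9.45 * ρ := by
      rw [← Real.sqrt_mul (by norm_num), show 3.15 * (3 * ρ ^ 2) = 9.45 * ρ ^ 2 by ring,
        Real.sqrt_mul (by norm_num), Real.sqrt_sq hρ]

lemma add_sqrt_sq_add_max_div_two_le {c t b ρ : ℝ} (hc0 : 0 ≤ c) (hc : c ≤ ρ) (ht0 : 0 ≤ t)
    (ht : t ≤ ρ) (hb : b ≤ ρ ^ 2) :
    (c + √(c ^ 2 + 4 * (t ^ 2 + max b (2.15 * t ^ 2)))) / 2 ≤ √9.45 * ρ := by
  have hρ : 0 ≤ ρ := ht0.trans ht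
  have hc2 : c ^ 2 ≤ ρ ^ 2 := pow_le_pow_left₀ hc0 hc 2
  have ht2 : t ^ 2 ≤ ρ ^ 2 := pow_le_pow_left₀ ht0 ht 2
  have hsqrt : √(c ^ 2 + 4 * (t ^ 2 + max b (2.15 * t ^ 2))) ≤ 3.7 * ρ := by
    have : max b (2.15 * t ^ 2) ≤ 2.15 * ρ ^ 2 := max_le (by linarith [sq_nonneg ρ]) (by linarith)
    rw [Real.sqrt_le_iff]
    constructor <;> nlinarith
  have h3 : 3 ≤ √9.45 := (Real.le_sqrt (by norm_num) (by norm_num)).mpr (by norm_num)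
  nlinarith

theorem Gamma_le_sqrt_mul_cauchyBound_general (n : ℕ) (hn : 3 ≤ n) (a : ℕ → ℂ)
    (ρ : ℝ) (hρ : 0 < ρ)
    (hCauchy : ρ ^ n = ∑ i ∈ Finset.range n, ‖a i‖ * ρ ^ i) :
    Gamma n a hn ≤ Real.sqrt 9.45 * ρ := by
  have hcoeff : ∀ k, 0 < k → k ≤ n → ‖a (n - k)‖ ≤ ρ ^ k := fun k hk hkn =>
    coeff_le_pow_of_pow_eq_sum (fun i => norm_nonneg (a i)) hρ hCauchy hk hkn
  have hτ0 := tau_nonneg n a hn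
  have hτ : tau n a hn ≤ ρ :=
    tau_le hn hρ.le fun k hk => hcoeff k (by grind) (mem_Icc.mp hk).2
  have ha₁ : ‖a (n - 1)‖ ≤ ρ := by simpa using hcoeff 1 one_pos (by omega)
  have ha₂ : ‖a (n - 2)‖ ≤ ρ ^ 2 := hcoeff 2 two_pos (by omega)
  exact max_le (sqrt_mul_sqrt_add_max_le hτ0 hτ ha₂)
    (add_sqrt_sq_add_max_div_two_le (norm_nonneg _) ha₁ hτ0 hτ ha₂)

/-- If `ρ > 0` is the Cauchy bound of a monic polynomial of degree `n ≥ 3` with some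
nonzero lower coefficient, then `Γ(p) ≤ √9.45 · ρ`. -/
theorem Gamma_le_sqrt_mul_cauchyBound (n : ℕ) (hn : 3 ≤ n) (a : ℕ → ℂ)
    (hne : ∃ i < n, a i ≠ 0) (ρ : ℝ) (hρ : 0 < ρ)
    (hCauchy : ρ ^ n = ∑ i ∈ Finset.range n, ‖a i‖ * ρ ^ i) :
    Gamma n a hn ≤ Real.sqrt 9.45 * ρ :=
  Gamma_le_sqrt_mul_cauchyBound_general n hn a ρ hρ hCauchy
end
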